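/- arXiv:2203.12386 — 10 statements merged into one kernel-verified Lean document; each statement's English description precedes it below -/
import Mathlib

section
/- Let (X,d) be a dissimilarity space, let M be an mmodule of (X,d) and let M' ⊆ M. Then M' is an mmodule of (X,d) if and only if M' is an mmodule of the subspace (M, d|_M). -/
/-- `M` is an mmodule of the subspace `(Y, d|_Y)` of the dissimilarity space `(X,d)`. -/
def IsMmoduleOn {X : Type*} (d : X → X → ℝ) (Y M : Set X) : Prop :=
  ∀ z ∈ Y \ M, ∀ x ∈ M, ∀ y ∈ M, d z x = d z y

/-- for an mmodule `M` and `M' ⊆ M`, `M'` is an mmodule of `(X,d)` iff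
`M'` is an mmodule of the subspace `(M, d|_M)`. -/
theorem mmodule_subspace {X : Type*} [Fintype X] (d : X → X → ℝ)
    (hsymm : ∀ x y : X, d x y = d y x)
    (hnonneg : ∀ x y : X, 0 ≤ d x y)
    (hself : ∀ x : X, d x x = 0)
    (M M' : Set X) (hM : IsMmoduleOn d Set.univ M) (hsub : M' ⊆ M) :
    IsMmoduleOn d Set.univ M' ↔ IsMmoduleOn d M M' := by
  constructor
  · intro h z hz x hx y hy
    exact h z ⟨Set.mem_univ z, hz.2⟩ x hx y hy
  · intro h z hz x hx y hy
    by_cases hzM : z ∈ M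
    · exact h z ⟨hzM, hz.2⟩ x hx y hy
    · exact hM z ⟨Set.mem_univ z, hzM⟩ x (hsub hx) y (hsub hy)
end

section
/- Let (X,d) be a dissimilarity space and let M₁, M₂ be mmodules of (X,d) with M₁ ∩ M₂ ≠ ∅. Then M₁ ∪ M₂ is an mmodule of (X,d); moreover, if in addition M₁ \ M₂ ≠ ∅ and M₂ \ M₁ ≠ ∅, then M₁ \ M₂, M₂ \ M₁ and the symmetric difference M₁ △ M₂ are all mmodules of (X,d). -/
def IsMmodule {X : Type*} (d : X → X → ℝ) (M : Set X) : Prop :=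
  ∀ z ∉ M, ∀ x ∈ M, ∀ y ∈ M, d z x = d z y

lemma mmodule_diff_aux {X : Type*} (d : X → X → ℝ)
    (hsymm : ∀ x y : X, d x y = d y x)
    (M₁ M₂ : Set X) (h₁ : IsMmodule d M₁) (h₂ : IsMmodule d M₂)
    (p : X) (hp : p ∈ M₁ ∩ M₂) (a : X) (ha : a ∈ M₂ \ M₁) :
    IsMmodule d (M₁ \ M₂) := by
  intro z hz x hx y hy
  by_cases hzM₁ : z ∈ M₁
  · have hzM₂ : z ∈ M₂ := by
      by_contra h; exact hz ⟨hzM₁, h⟩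
    have hax : d a x = d a y := h₁ a ha.2 x hx.1 y hy.1
    have hxa : d x a = d x p := h₂ x hx.2 a ha.1 p hp.2
    have hya : d y a = d y p := h₂ y hy.2 a ha.1 p hp.2
    have hxz : d x z = d x p := h₂ x hx.2 z hzM₂ p hp.2
    have hyz : d y z = d y p := h₂ y hy.2 z hzM₂ p hp.2
    have : d x p = d y p := by
      rw [← hxa, ← hya, hsymm x a, hsymm y a, hax]
    rw [hsymm z x, hsymm z y, hxz, hyz, this]
  · exact h₁ z hzM₁ x hx.1 y hy.1

/-- if `M₁`, `M₂` are intersecting mmodules then `M₁ ∪ M₂` is an mmodule;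
if moreover `M₁ \ M₂` and `M₂ \ M₁` are nonempty, then `M₁ \ M₂`, `M₂ \ M₁` and the
symmetric difference `M₁ △ M₂` are mmodules. -/
theorem mmodule_union_diffs {X : Type*} [Fintype X] (d : X → X → ℝ)
    (hsymm : ∀ x y : X, d x y = d y x)
    (hnonneg : ∀ x y : X, 0 ≤ d x y)
    (hself : ∀ x : X, d x x = 0)
    (M₁ M₂ : Set X) (h₁ : IsMmodule d M₁) (h₂ : IsMmodule d M₂)
    (hint : (M₁ ∩ M₂).Nonempty) :
    IsMmodule d (M₁ ∪ M₂) ∧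
      ((M₁ \ M₂).Nonempty → (M₂ \ M₁).Nonempty →
        IsMmodule d (M₁ \ M₂) ∧ IsMmodule d (M₂ \ M₁) ∧
          IsMmodule d ((M₁ \ M₂) ∪ (M₂ \ M₁))) := by
  obtain ⟨p, hp⟩ := hint
  have key : ∀ z ∉ M₁ ∪ M₂, ∀ x ∈ M₁ ∪ M₂, d z x = d z p := by
    intro z hz x hx
    rcases hx with hx | hx
    · exact h₁ z (fun h => hz (Or.inl h)) x hx p hp.1
    · exact h₂ z (fun h => hz (Or.inr h)) x hx p hp.2
  refine ⟨fun z hz x hx y hy => (key z hz x hx).trans (key z hz y hy).symm,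
    fun he₁ he₂ => ?_⟩
  obtain ⟨a, ha⟩ := he₂
  obtain ⟨b, hb⟩ := he₁
  have hD₁ := mmodule_diff_aux d hsymm M₁ M₂ h₁ h₂ p hp a ha
  have hD₂ := mmodule_diff_aux d hsymm M₂ M₁ h₂ h₁ p ⟨hp.2, hp.1⟩ b hb
  refine ⟨hD₁, hD₂, ?_⟩
  intro z hz x hx y hy
  have hz₁ : z ∉ M₁ \ M₂ := fun h => hz (Or.inl h)
  have hz₂ : z ∉ M₂ \ M₁ := fun h => hz (Or.inr h)
  have case : ∀ u v : X, u ∈ M₁ \ M₂ → v ∈ M₂ \ M₁ → d z u = d z v := by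
    intro u v hu hv
    by_cases hzM₁ : z ∈ M₁
    · have hzM₂ : z ∈ M₂ := by by_contra h; exact hz₁ ⟨hzM₁, h⟩
      have h1 : d u z = d u v := h₂ u hu.2 z hzM₂ v hv.1
      have h2 : d v z = d v u := h₁ v hv.2 z hzM₁ u hu.1
      rw [hsymm z u, hsymm z v, h1, h2, hsymm u v]
    · have hzM₂ : z ∉ M₂ := fun h => hz₂ ⟨h, hzM₁⟩
      have h1 : d z u = d z p := h₁ z hzM₁ u hu.1 p hp.1
      have h2 : d z v = d z p := h₂ z hzM₂ v hv.1 p hp.2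
      rw [h1, h2]
  rcases hx with hx | hx <;> rcases hy with hy | hy
  · exact hD₁ z hz₁ x hx y hy
  · exact case x y hx hy
  · exact (case y x hy hx).symm
  · exact hD₂ z hz₂ x hx y hy
end

section
/- Let (X,d) be a dissimilarity space and let M₁, M₂ be two distinct maximal mmodules of (X,d) with M₁ ∩ M₂ ≠ ∅. Then M₁ ∪ M₂ = X. -/
/-- A maximal mmodule: maximal by inclusion among the mmodules different from `X`. -/
def IsMaximalMmodule {X : Type*} (d : X → X → ℝ) (M : Set X) : Prop :=
  IsMmodule d M ∧ M ≠ Set.univ ∧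
    ∀ M' : Set X, IsMmodule d M' → M' ≠ Set.univ → M ⊆ M' → M' = M

/-- the union of two distinct intersecting maximal mmodules is `X`. -/
theorem maximal_mmodules_union {X : Type*} [Fintype X] (d : X → X → ℝ)
    (hsymm : ∀ x y : X, d x y = d y x)
    (hnonneg : ∀ x y : X, 0 ≤ d x y)
    (hself : ∀ x : X, d x x = 0)
    (M₁ M₂ : Set X) (h₁ : IsMaximalMmodule d M₁) (h₂ : IsMaximalMmodule d M₂)
    (hne : M₁ ≠ M₂) (hint : (M₁ ∩ M₂).Nonempty) :
    M₁ ∪ M₂ = Set.univ := by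
  obtain ⟨p, hp₁, hp₂⟩ := hint
  have hunion : IsMmodule d (M₁ ∪ M₂) := by
    intro z hz x hx y hy
    have hz₁ : z ∉ M₁ := fun h => hz (Or.inl h)
    have hz₂ : z ∉ M₂ := fun h => hz (Or.inr h)
    have key : ∀ w ∈ M₁ ∪ M₂, d z w = d z p := by
      intro w hw
      rcases hw with h | h
      · exact h₁.1 z hz₁ w h p hp₁
      · exact h₂.1 z hz₂ w h p hp₂
    rw [key x hx, key y hy]
  by_contra hu
  have e1 : M₁ ∪ M₂ = M₁ := h₁.2.2 _ hunion hu Set.subset_union_left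
  have hsub : M₂ ⊆ M₁ := by rw [← e1]; exact Set.subset_union_right
  exact hne ((h₂.2.2 M₁ h₁.1 h₁.2.1 hsub))
end

section
/- Let (X,d) be a dissimilarity space, let M₁ and M₂ be two disjoint maximal mmodules of (X,d), and let M be a nontrivial mmodule of (X,d) contained in M₁ ∪ M₂. Then M ⊆ M₁ or M ⊆ M₂. -/
lemma union_mmodule {X : Type*} (d : X → X → ℝ) {M M' : Set X}
    (hM : IsMmodule d M) (hM' : IsMmodule d M') (h : (M ∩ M').Nonempty) :
    IsMmodule d (M ∪ M') := by
  obtain ⟨w, hwM, hwM'⟩ := h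
  intro z hz x hx y hy
  have hz1 : z ∉ M := fun h => hz (Or.inl h)
  have hz2 : z ∉ M' := fun h => hz (Or.inr h)
  have key : ∀ a ∈ M ∪ M', d z a = d z w := by
    intro a ha
    rcases ha with h | h
    · exact hM z hz1 a h w hwM
    · exact hM' z hz2 a h w hwM'
  rw [key x hx, key y hy]

lemma sub_of_maximal {X : Type*} (d : X → X → ℝ) {M M₁ : Set X}
    (hM : IsMmodule d M) (h₁ : IsMaximalMmodule d M₁)
    (hne : (M ∩ M₁).Nonempty) (hu : M ∪ M₁ ≠ Set.univ) : M ⊆ M₁ := by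
  have hmm := union_mmodule d hM h₁.1 hne
  have := h₁.2.2 (M ∪ M₁) hmm hu Set.subset_union_right
  intro x hx
  rw [← this]; exact Or.inl hx

/-- a nontrivial mmodule contained in the union of two disjoint maximal
mmodules is contained in one of them. -/
theorem nontrivial_mmodule_in_disjoint_maximal {X : Type*} [Fintype X] (d : X → X → ℝ)
    (hsymm : ∀ x y : X, d x y = d y x)
    (hnonneg : ∀ x y : X, 0 ≤ d x y)
    (hself : ∀ x : X, d x x = 0)
    (M₁ M₂ : Set X) (h₁ : IsMaximalMmodule d M₁) (h₂ : IsMaximalMmodule d M₂)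
    (hdisj : Disjoint M₁ M₂)
    (M : Set X) (hM : IsMmodule d M)
    (hM0 : M ≠ ∅) (hMX : M ≠ Set.univ) (hMs : ∀ x : X, M ≠ {x})
    (hsub : M ⊆ M₁ ∪ M₂) :
    M ⊆ M₁ ∨ M ⊆ M₂ := by
  by_cases e1 : M ∩ M₁ = ∅
  · -- M ⊆ M₂
    right
    intro x hx
    rcases hsub hx with h | h
    · exact absurd (Set.mem_inter hx h) (by simp [e1])
    · exact h
  · have hne1 : (M ∩ M₁).Nonempty := Set.nonempty_iff_ne_empty.mpr e1
    by_cases u1 : M ∪ M₁ = Set.univ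
    · -- then M₂ ⊆ M, and M ∩ M₂ nonempty unless M₂ = ∅
      have hM2sub : M₂ ⊆ M := by
        intro x hx
        rcases (u1 ▸ Set.mem_univ x : x ∈ M ∪ M₁) with h | h
        · exact h
        · exact (Set.disjoint_left.mp hdisj h hx).elim
      -- M₂ nonempty? If M₂ = ∅, maximality of M₂ forces M = ∅, contradiction.
      have hM2ne : M₂.Nonempty := by
        rcases Set.eq_empty_or_nonempty M₂ with h | h
        · exfalso
          have heq := h₂.2.2 M hM hMX (h ▸ Set.empty_subset M)
          exact hM0 (heq.trans h)
        · exact h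
      have hne2 : (M ∩ M₂).Nonempty := by
        obtain ⟨x, hx⟩ := hM2ne
        exact ⟨x, hM2sub hx, hx⟩
      by_cases u2 : M ∪ M₂ = Set.univ
      · -- both unions univ ⇒ M₁ ⊆ M and M₂ ⊆ M ⇒ M = univ, contradiction
        exfalso
        have hM1sub : M₁ ⊆ M := by
          intro x hx
          rcases (u2 ▸ Set.mem_univ x : x ∈ M ∪ M₂) with h | h
          · exact h
          · exact (Set.disjoint_left.mp hdisj hx h).elim
        apply hMX
        apply Set.eq_univ_of_univ_subset
        intro x _
        rcases (u1 ▸ Set.mem_univ x : x ∈ M ∪ M₁) with h | h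
        · exact h
        · exact hM1sub h
      · exact Or.inr (sub_of_maximal d hM h₂ hne2 u2)
    · exact Or.inl (sub_of_maximal d hM h₁ hne1 u1)
end

section
/- Let (X,d) be a dissimilarity space with |X| ≥ 2 and let M̂ be the set of all maximal mmodules of (X,d). Then either M̂ is a partition of X (its members are pairwise disjoint and their union is X), or M̂ is a copartition of X (the complements {X \ M : M ∈ M̂} are pairwise disjoint and their union is X). -/
section

open Set

variable {X : Type*} {d : X → X → ℝ} {M N : Set X}

namespace IsMmodule

theorem singleton (x : X) : IsMmodule d {x} := by
  rintro z - a rfl b rfl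
  rfl

theorem union (hM : IsMmodule d M) (hN : IsMmodule d N) (h : (M ∩ N).Nonempty) :
    IsMmodule d (M ∪ N) := by
  obtain ⟨w, hwM, hwN⟩ := h
  intro z hz
  rw [mem_union, not_or] at hz
  have to_w : ∀ x ∈ M ∪ N, d z x = d z w := by
    rintro x (hx | hx)
    · exact hM z hz.1 x hx w hwM
    · exact hN z hz.2 x hx w hwN
  intro x hx y hy
  rw [to_w x hx, to_w y hy]

theorem apply_eq_of_union_eq_univ (hsymm : ∀ x y, d x y = d y x) (hM : IsMmodule d M)
    (hN : IsMmodule d N) (hMN : M ∪ N = univ) {t x y : X} (htM : t ∈ M) (htN : t ∈ N)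
    (hx : x ∉ M) (hy : y ∉ N) : d t x = d t y := by
  have hyM : y ∈ M := (hMN ▸ mem_univ y : y ∈ M ∪ N).resolve_right hy
  have hxN : x ∈ N := (hMN ▸ mem_univ x : x ∈ M ∪ N).resolve_left hx
  calc d t x = d x t := hsymm t x
    _ = d x y := hM x hx t htM y hyM
    _ = d y x := hsymm x y
    _ = d y t := (hN y hy t htN x hxN).symm
    _ = d t y := hsymm y t

theorem exists_maximal_superset [Finite X] (hM : IsMmodule d M) (hne : M ≠ univ) :
    ∃ N, IsMaximalMmodule d N ∧ M ⊆ N := by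
  obtain ⟨N, hMN, hNP, hNmax⟩ :=
    (toFinite {M' : Set X | IsMmodule d M' ∧ M' ≠ univ}).exists_le_maximal ⟨hM, hne⟩
  exact ⟨N, ⟨hNP.1, hNP.2, fun M' hM' hne' hNM' => (hNmax ⟨hM', hne'⟩ hNM').antisymm hNM'⟩, hMN⟩

end IsMmodule

namespace IsMaximalMmodule

theorem union_eq_univ (hM : IsMaximalMmodule d M) (hN : IsMaximalMmodule d N) (hMN : M ≠ N)
    (h : (M ∩ N).Nonempty) : M ∪ N = univ := by
  by_contra hne
  have hunion : M ∪ N = M := hM.2.2 _ (hM.1.union hN.1 h) hne subset_union_left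
  exact hMN (hN.2.2 M hM.1 hM.2.1 (hunion ▸ subset_union_right))

theorem inter_nonempty_of_inter_nonempty {M₁ M₂ : Set X} (hM₁ : IsMaximalMmodule d M₁)
    (hM₂ : IsMaximalMmodule d M₂) (h12 : M₁ ≠ M₂) (hI : (M₁ ∩ M₂).Nonempty)
    (hN : IsMaximalMmodule d N) : (N ∩ M₁).Nonempty := by
  rw [← not_disjoint_iff_nonempty_inter]
  intro hdisj
  have hNM₂ : N ⊆ M₂ := hdisj.subset_compl_right.trans
    (compl_subset_iff_union.mpr (hM₁.union_eq_univ hM₂ h12 hI))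
  rw [← hN.2.2 M₂ hM₂.1 hM₂.2.1 hNM₂] at hdisj
  exact not_disjoint_iff_nonempty_inter.mpr hI hdisj.symm

theorem pairwise_disjoint_or_pairwise_union_eq_univ :
    (∀ M N, IsMaximalMmodule d M → IsMaximalMmodule d N → M ≠ N → Disjoint M N) ∨
      (∀ M N, IsMaximalMmodule d M → IsMaximalMmodule d N → M ≠ N → M ∪ N = univ) := by
  by_cases hdisj : ∀ M N, IsMaximalMmodule d M → IsMaximalMmodule d N → M ≠ N → Disjoint M N
  · exact .inl hdisj
  push Not at hdisj
  obtain ⟨M₁, M₂, hM₁, hM₂, h12, hI⟩ := hdisj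
  rw [not_disjoint_iff_nonempty_inter] at hI
  have meets : ∀ N, IsMaximalMmodule d N → (N ∩ M₁).Nonempty :=
    fun N hN => inter_nonempty_of_inter_nonempty hM₁ hM₂ h12 hI hN
  have covers : ∀ N, IsMaximalMmodule d N → N ≠ M₁ → M₁ᶜ ⊆ N := fun N hN hne =>
    compl_subset_iff_union.mpr (union_comm N M₁ ▸ hN.union_eq_univ hM₁ hne (meets N hN))
  refine .inr fun N₁ N₂ hN₁ hN₂ hne => hN₁.union_eq_univ hN₂ hne ?_
  by_cases h₁ : N₁ = M₁
  · exact h₁ ▸ inter_comm N₂ M₁ ▸ meets N₂ hN₂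
  by_cases h₂ : N₂ = M₁
  · exact h₂ ▸ meets N₁ hN₁
  obtain ⟨v, hv⟩ := nonempty_compl.mpr hM₁.2.1
  exact ⟨v, covers N₁ hN₁ h₁ hv, covers N₂ hN₂ h₂ hv⟩

theorem exists_mem [Finite X] [Nontrivial X] (x : X) : ∃ N, IsMaximalMmodule d N ∧ x ∈ N :=
  let ⟨N, hN, hxN⟩ := (IsMmodule.singleton x).exists_maximal_superset (singleton_ne_univ x)
  ⟨N, hN, hxN rfl⟩

theorem exists_ne [Finite X] [Nontrivial X] (hN : IsMaximalMmodule d N) :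
    ∃ N', IsMaximalMmodule d N' ∧ N' ≠ N := by
  obtain ⟨x, hx⟩ := (ne_univ_iff_exists_notMem N).mp hN.2.1
  obtain ⟨N', hN', hxN'⟩ := exists_mem (d := d) x
  exact ⟨N', hN', fun h => hx (h ▸ hxN')⟩

theorem sUnion_eq_univ [Finite X] [Nontrivial X] : ⋃₀ {M | IsMaximalMmodule d M} = univ :=
  eq_univ_of_forall exists_mem

theorem isMmodule_compl_sInter [Finite X] [Nontrivial X] (hsymm : ∀ x y, d x y = d y x)
    (hcover : ∀ M N, IsMaximalMmodule d M → IsMaximalMmodule d N → M ≠ N → M ∪ N = univ) :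
    IsMmodule d (⋂₀ {M | IsMaximalMmodule d M})ᶜ := by
  intro t ht x hx y hy
  rw [notMem_compl_iff, mem_sInter] at ht
  simp only [mem_compl_iff, mem_sInter, mem_ofPred_eq, not_forall] at hx hy
  obtain ⟨Nx, hNx, hxNx⟩ := hx
  obtain ⟨Ny, hNy, hyNy⟩ := hy
  have key : ∀ {N N'} (hN : IsMaximalMmodule d N) (hN' : IsMaximalMmodule d N'),
      N ≠ N' → ∀ {a b}, a ∉ N → b ∉ N' → d t a = d t b :=
    fun hN hN' hne _ _ ha hb => hN.1.apply_eq_of_union_eq_univ hsymm hN'.1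
      (hcover _ _ hN hN' hne) (ht _ hN) (ht _ hN') ha hb
  by_cases hxy : Nx = Ny
  · subst hxy
    obtain ⟨N', hN', hne⟩ := hNx.exists_ne
    obtain ⟨w, hw⟩ := (ne_univ_iff_exists_notMem N').mp hN'.2.1
    rw [key hNx hN' hne.symm hxNx hw, key hNx hN' hne.symm hyNy hw]
  · exact key hNx hNy hxy hxNx hyNy

theorem sInter_eq_empty [Finite X] [Nontrivial X] (hsymm : ∀ x y, d x y = d y x)
    (hcover : ∀ M N, IsMaximalMmodule d M → IsMaximalMmodule d N → M ≠ N → M ∪ N = univ) :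
    ⋂₀ {M | IsMaximalMmodule d M} = ∅ := by
  by_contra hne
  obtain ⟨N, hN, hsub⟩ := (isMmodule_compl_sInter hsymm hcover).exists_maximal_superset
    (compl_ne_univ.mpr (nonempty_iff_ne_empty.mpr hne))
  refine hN.2.1 (univ_subset_iff.mp ?_)
  rw [← compl_union_self (⋂₀ _)]
  exact union_subset hsub (sInter_subset_of_mem hN)

end IsMaximalMmodule

end

theorem maximal_mmodules_partition_or_copartition_general {X : Type*} [Fintype X]
    (d : X → X → ℝ)
    (hsymm : ∀ x y : X, d x y = d y x)
    (hcard : 2 ≤ Fintype.card X) :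
    ((∀ M₁ ∈ {M : Set X | IsMaximalMmodule d M},
        ∀ M₂ ∈ {M : Set X | IsMaximalMmodule d M}, M₁ ≠ M₂ → Disjoint M₁ M₂) ∧
      ⋃₀ {M : Set X | IsMaximalMmodule d M} = Set.univ) ∨
    ((∀ M₁ ∈ {M : Set X | IsMaximalMmodule d M},
        ∀ M₂ ∈ {M : Set X | IsMaximalMmodule d M}, M₁ ≠ M₂ → Disjoint M₁ᶜ M₂ᶜ) ∧
      ⋃₀ (compl '' {M : Set X | IsMaximalMmodule d M}) = Set.univ) := by
  have : Nontrivial X := Fintype.one_lt_card_iff_nontrivial.mp hcard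
  rcases IsMaximalMmodule.pairwise_disjoint_or_pairwise_union_eq_univ (d := d) with
    hdisj | hcover
  · exact .inl ⟨fun M₁ h₁ M₂ h₂ => hdisj M₁ M₂ h₁ h₂, IsMaximalMmodule.sUnion_eq_univ⟩
  · refine .inr ⟨fun M₁ h₁ M₂ h₂ hne => ?_, ?_⟩
    · rw [Set.disjoint_compl_left_iff_subset, Set.compl_subset_iff_union]
      exact hcover M₂ M₁ h₂ h₁ hne.symm
    · rw [← Set.compl_sInter, IsMaximalMmodule.sInter_eq_empty hsymm hcover, Set.compl_empty]

/-- the set of maximal mmodules is either a partition of `X`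
(pairwise disjoint with union `X`) or a copartition of `X` (the complements are
pairwise disjoint with union `X`). -/
theorem maximal_mmodules_partition_or_copartition {X : Type*} [Fintype X]
    (d : X → X → ℝ)
    (hsymm : ∀ x y : X, d x y = d y x)
    (hnonneg : ∀ x y : X, 0 ≤ d x y)
    (hself : ∀ x : X, d x x = 0)
    (hcard : 2 ≤ Fintype.card X) :
    ((∀ M₁ ∈ {M : Set X | IsMaximalMmodule d M},
        ∀ M₂ ∈ {M : Set X | IsMaximalMmodule d M}, M₁ ≠ M₂ → Disjoint M₁ M₂) ∧
      ⋃₀ {M : Set X | IsMaximalMmodule d M} = Set.univ) ∨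
    ((∀ M₁ ∈ {M : Set X | IsMaximalMmodule d M},
        ∀ M₂ ∈ {M : Set X | IsMaximalMmodule d M}, M₁ ≠ M₂ → Disjoint M₁ᶜ M₂ᶜ) ∧
      ⋃₀ (compl '' {M : Set X | IsMaximalMmodule d M}) = Set.univ) :=
  maximal_mmodules_partition_or_copartition_general d hsymm hcard
end

section
/- Let (X,d) be a dissimilarity space whose set of maximal mmodules M̂ = {M₁,...,M_k} is a copartition of X (i.e., {X \ M₁,...,X \ M_k} is a partition of X). Then for any mmodule M of (X,d), either there is a set of indices J ⊆ {1,...,k} such that M = ⋃_{j ∈ J} (X \ M_j), or there is an index i ∈ {1,...,k} such that M is strictly contained in X \ M_i. -/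
/-- if the set of maximal mmodules is a copartition of `X` (the
complements of maximal mmodules are pairwise disjoint and cover `X`), then every
mmodule `M` is either a union of complements of maximal mmodules, or is strictly
contained in the complement of some maximal mmodule. -/
theorem mmodules_in_copartition {X : Type*} [Fintype X] (d : X → X → ℝ)
    (hsymm : ∀ x y : X, d x y = d y x)
    (hnonneg : ∀ x y : X, 0 ≤ d x y)
    (hself : ∀ x : X, d x x = 0)
    (hdisj : ∀ M₁ ∈ {N : Set X | IsMaximalMmodule d N},
      ∀ M₂ ∈ {N : Set X | IsMaximalMmodule d N}, M₁ ≠ M₂ → Disjoint M₁ᶜ M₂ᶜ)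
    (hcover : ⋃₀ (compl '' {N : Set X | IsMaximalMmodule d N}) = Set.univ)
    (M : Set X) (hM : IsMmodule d M) :
    (∃ S ⊆ {N : Set X | IsMaximalMmodule d N}, M = ⋃ N ∈ S, Nᶜ) ∨
    (∃ N ∈ {N : Set X | IsMaximalMmodule d N}, M ⊂ Nᶜ) := by
  by_cases hA : ∃ N, IsMaximalMmodule d N ∧ M ⊆ Nᶜ
  · obtain ⟨N, hN, hsub⟩ := hA
    rcases hsub.ssubset_or_eq with h | h
    · right; exact ⟨N, hN, h⟩
    · left
      exact ⟨{N}, by simpa using hN, by simp [h]⟩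
  · left
    push_neg at hA
    refine ⟨{N | IsMaximalMmodule d N ∧ (M ∩ Nᶜ).Nonempty}, fun N hN => hN.1, ?_⟩
    apply Set.Subset.antisymm
    · intro x hx
      have hx' : x ∈ ⋃₀ (compl '' {N : Set X | IsMaximalMmodule d N}) :=
        hcover ▸ Set.mem_univ x
      obtain ⟨_, ⟨N, hN, rfl⟩, hxN⟩ := hx'
      exact Set.mem_biUnion ⟨hN, ⟨x, hx, hxN⟩⟩ hxN
    · intro x hx
      simp only [Set.mem_iUnion, Set.mem_setOf_eq] at hx
      obtain ⟨N, ⟨hN, hne⟩, hxN⟩ := hx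
      have hMN : (M ∩ N).Nonempty := by
        have h2 := hA N hN
        rw [Set.not_subset] at h2
        obtain ⟨y, hyM, hyN⟩ := h2
        exact ⟨y, hyM, by simpa using hyN⟩
      have hunion : IsMmodule d (M ∪ N) := by
        intro z hz a ha b hb
        obtain ⟨w, hwM, hwN⟩ := hMN
        have hzM : z ∉ M := fun h => hz (Or.inl h)
        have hzN : z ∉ N := fun h => hz (Or.inr h)
        rcases ha with ha | ha <;> rcases hb with hb | hb
        · exact hM z hzM a ha b hb
        · calc d z a = d z w := hM z hzM a ha w hwM
               _ = d z b := hN.1 z hzN w hwN b hb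
        · calc d z a = d z w := hN.1 z hzN a ha w hwN
               _ = d z b := hM z hzM w hwM b hb
        · exact hN.1 z hzN a ha b hb
      by_cases huniv : M ∪ N = Set.univ
      · have hx2 : x ∈ M ∪ N := huniv ▸ Set.mem_univ x
        rcases hx2 with h | h
        · exact h
        · exact absurd h hxN
      · exfalso
        have heq := hN.2.2 (M ∪ N) hunion huniv Set.subset_union_right
        obtain ⟨y, hyM, hyNc⟩ := hne
        exact hyNc (by rw [← heq]; exact Or.inl hyM)
end

section
/- Let (X,d) be a dissimilarity space with a compatible order q₁ < q₂ < ... < q_n, let M be an mmodule of (X,d), let i = min{k : q_k ∈ M} and j = max{k : q_k ∈ M}. Then the total order <' obtained from < by reversing the order of the elements q_i, q_{i+1}, ..., q_j (i.e., q₁ <' ... <' q_{i-1} <' q_j <' q_{j-1} <' ... <' q_i <' q_{j+1} <' ... <' q_n) is also a compatible order of (X,d). -/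
/-- A (strict total) order `lt` is compatible with `d` when `x < y < z` implies
`d(x,z) ≥ max (d(x,y)) (d(y,z))`. -/
def IsCompatible {X : Type*} (d : X → X → ℝ) (lt : X → X → Prop) : Prop :=
  ∀ x y z : X, lt x y → lt y z → max (d x y) (d y z) ≤ d x z

/-- The segment spanned by `M` with respect to `lt`: all points lying between the
minimum element `q_i` and the maximum element `q_j` of `M` (inclusive). -/
def spanSeg {X : Type*} (lt : X → X → Prop) (M : Set X) : Set X :=
  {x : X | ∃ a ∈ M, ∃ b ∈ M, ¬ lt x a ∧ ¬ lt b x}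

/-- The order obtained from `lt` by reversing the order of the elements of the
segment `q_i, q_{i+1}, …, q_j` spanned by `M`, and keeping `lt` elsewhere. -/
def revOrder {X : Type*} (lt : X → X → Prop) (M : Set X) : X → X → Prop :=
  fun x y =>
    (x ∈ spanSeg lt M ∧ y ∈ spanSeg lt M ∧ lt y x) ∨
    (¬ (x ∈ spanSeg lt M ∧ y ∈ spanSeg lt M) ∧ lt x y)

/-!
The block spanned by `M` is an order interval, and it is itself an mmodule: a point outside the
block lies on one side of it, and compatibility squeezes its distance to any block point between
its distances to two points of `M`, which agree. Reversing an interval that is an mmodule keeps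
the order compatible: triples inside the block or avoiding it are unaffected (up to symmetry of
`d`), and in a mixed triple the outside point is equidistant from the two block points.
-/

open Set

def reverseOn {X : Type*} [LinearOrder X] (S : Set X) (x y : X) : Prop :=
  (x ∈ S ∧ y ∈ S ∧ y < x) ∨ (¬ (x ∈ S ∧ y ∈ S) ∧ x < y)

section LinearOrder

variable {X : Type*} [LinearOrder X] {S M : Set X} {d : X → X → ℝ} {x y z : X}

theorem Set.OrdConnected.lt_of_notMem_of_lt (hS : S.OrdConnected) (hz : z ∉ S) (hy : y ∈ S)
    (hyz : y < z) (hx : x ∈ S) : x < z :=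
  lt_of_not_ge fun hzx => hz (hS.out hy hx ⟨hyz.le, hzx⟩)

theorem Set.OrdConnected.lt_of_notMem_of_gt (hS : S.OrdConnected) (hx : x ∉ S) (hy : y ∈ S)
    (hxy : x < y) (hz : z ∈ S) : x < z :=
  lt_of_not_ge fun hzx => hx (hS.out hz hy ⟨hzx, hxy.le⟩)

theorem isStrictTotalOrder_reverseOn (hS : S.OrdConnected) :
    IsStrictTotalOrder X (reverseOn S) where
  trichotomous a b hab hba := by
    unfold reverseOn at hab hba
    rcases lt_trichotomy a b with h | h | h <;> tauto
  irrefl a h := by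
    rcases h with ⟨-, -, h⟩ | ⟨-, h⟩ <;> exact lt_irrefl a h
  trans a b c hab hbc := by
    rcases hab with ⟨ha, hb, hba⟩ | ⟨hab_out, hab⟩ <;>
      rcases hbc with ⟨hb', hc, hcb⟩ | ⟨hbc_out, hbc⟩
    · exact Or.inl ⟨ha, hc, hcb.trans hba⟩
    · have hc : c ∉ S := fun hc => hbc_out ⟨hb, hc⟩
      exact Or.inr ⟨fun h => hc h.2, hS.lt_of_notMem_of_lt hc hb hbc ha⟩
    · have ha : a ∉ S := fun ha => hab_out ⟨ha, hb'⟩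
      exact Or.inr ⟨fun h => ha h.1, hS.lt_of_notMem_of_gt ha hb' hab hc⟩
    · refine Or.inr ⟨fun ⟨ha, hc⟩ => ?_, hab.trans hbc⟩
      exact hab_out ⟨ha, hS.out ha hc ⟨hab.le, hbc.le⟩⟩

theorem IsCompatible.le_of_lt_of_le (hcomp : IsCompatible d (· < ·)) (hzx : z < x) (hxy : x ≤ y) :
    d z x ≤ d z y := by
  rcases hxy.lt_or_eq with hxy | rfl
  · exact (le_max_left _ _).trans (hcomp z x y hzx hxy)
  · rfl

theorem IsCompatible.le_of_le_of_lt (hcomp : IsCompatible d (· < ·)) (hxy : x ≤ y) (hyz : y < z) :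
    d y z ≤ d x z := by
  rcases hxy.lt_or_eq with hxy | rfl
  · exact (le_max_right _ _).trans (hcomp x y z hxy hyz)
  · rfl

theorem isCompatible_reverseOn (hsymm : ∀ x y, d x y = d y x) (hcomp : IsCompatible d (· < ·))
    (hS : S.OrdConnected) (hSd : IsMmodule d S) : IsCompatible d (reverseOn S) := by
  intro x y z hxy hyz
  rcases hxy with ⟨hx, hy, hyx⟩ | ⟨hxy_out, hxy⟩ <;>
    rcases hyz with ⟨hy', hz, hzy⟩ | ⟨hyz_out, hyz⟩
  · rw [hsymm x y, hsymm y z, hsymm x z, max_comm]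
    exact hcomp z y x hzy hyx
  · have hz : z ∉ S := fun hz => hyz_out ⟨hy, hz⟩
    have hyz_eq : d y z = d x z := by rw [hsymm y z, hsymm x z, hSd z hz y hy x hx]
    refine max_le ?_ hyz_eq.le
    rw [hsymm x y, ← hyz_eq]
    exact (le_max_left _ _).trans (hcomp y x z hyx (hS.lt_of_notMem_of_lt hz hy hyz hx))
  · have hx : x ∉ S := fun hx => hxy_out ⟨hx, hy'⟩
    have hxy_eq : d x y = d x z := hSd x hx y hy' z hz
    refine max_le hxy_eq.le ?_
    rw [hsymm y z, ← hxy_eq]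
    exact (le_max_right _ _).trans (hcomp x z y (hS.lt_of_notMem_of_gt hx hy' hxy hz) hzy)
  · exact hcomp x y z hxy hyz

theorem mem_spanSeg_iff : x ∈ spanSeg (· < ·) M ↔ ∃ a ∈ M, ∃ b ∈ M, a ≤ x ∧ x ≤ b := by
  simp only [spanSeg, mem_ofPred_eq, not_lt]

theorem subset_spanSeg : M ⊆ spanSeg (· < ·) M :=
  fun x hx => mem_spanSeg_iff.2 ⟨x, hx, x, hx, le_rfl, le_rfl⟩

theorem ordConnected_spanSeg : (spanSeg (· < ·) M).OrdConnected :=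
  ⟨fun _ hx _ hy _ hz => by
    obtain ⟨a, ha, -, -, hax, -⟩ := mem_spanSeg_iff.1 hx
    obtain ⟨-, -, b, hb, -, hyb⟩ := mem_spanSeg_iff.1 hy
    exact mem_spanSeg_iff.2 ⟨a, ha, b, hb, hax.trans hz.1, hz.2.trans hyb⟩⟩

theorem isMmodule_spanSeg (hsymm : ∀ x y, d x y = d y x) (hcomp : IsCompatible d (· < ·))
    (hM : IsMmodule d M) : IsMmodule d (spanSeg (· < ·) M) := by
  intro z hz
  have hzM : z ∉ M := fun h => hz (subset_spanSeg h)
  suffices h : ∀ u ∈ spanSeg (· < ·) M, ∃ a ∈ M, d z u = d z a by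
    intro u hu v hv
    obtain ⟨a, ha, hua⟩ := h u hu
    obtain ⟨b, hb, hvb⟩ := h v hv
    rw [hua, hvb, hM z hzM a ha b hb]
  intro u hu
  obtain ⟨a, ha, b, hb, hau, hub⟩ := mem_spanSeg_iff.1 hu
  have hab : d z a = d z b := hM z hzM a ha b hb
  refine ⟨a, ha, ?_⟩
  rcases lt_or_gt_of_ne (ne_of_mem_of_not_mem hu hz).symm with hzu | huz
  · have hza : z < a :=
      ordConnected_spanSeg.lt_of_notMem_of_gt hz hu hzu (subset_spanSeg ha)
    exact le_antisymm (hab ▸ hcomp.le_of_lt_of_le hzu hub) (hcomp.le_of_lt_of_le hza hau)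
  · have hbz : b < z :=
      ordConnected_spanSeg.lt_of_notMem_of_lt hz hu huz (subset_spanSeg hb)
    have h₁ := hcomp.le_of_le_of_lt hau huz
    have h₂ := hcomp.le_of_le_of_lt hub hbz
    rw [hsymm u z, hsymm a z] at h₁
    rw [hsymm b z, hsymm u z, ← hab] at h₂
    exact le_antisymm h₁ h₂

end LinearOrder

theorem reverse_mmodule_block_compatible_general {X : Type*} (d : X → X → ℝ)
    (hsymm : ∀ x y : X, d x y = d y x)
    (lt : X → X → Prop) (hsto : IsStrictTotalOrder X lt)
    (hcomp : IsCompatible d lt)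
    (M : Set X) (hM : IsMmodule d M) :
    IsStrictTotalOrder X (revOrder lt M) ∧ IsCompatible d (revOrder lt M) := by
  classical
  -- `<` of this order is `lt` itself, so `revOrder lt M` unfolds to `reverseOn (spanSeg (· < ·) M)`.
  let := linearOrderOfSTO lt
  have hS : (spanSeg (· < ·) M).OrdConnected := ordConnected_spanSeg
  exact ⟨isStrictTotalOrder_reverseOn hS,
    isCompatible_reverseOn hsymm hcomp hS (isMmodule_spanSeg hsymm hcomp hM)⟩

/-- given a compatible order of `(X,d)` and an mmodule `M`, reversing
the block of elements between the minimum and the maximum of `M` yields again a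
compatible (total) order of `(X,d)`. -/
theorem reverse_mmodule_block_compatible {X : Type*} [Fintype X] (d : X → X → ℝ)
    (hsymm : ∀ x y : X, d x y = d y x)
    (hnonneg : ∀ x y : X, 0 ≤ d x y)
    (hself : ∀ x : X, d x x = 0)
    (lt : X → X → Prop) (hsto : IsStrictTotalOrder X lt)
    (hcomp : IsCompatible d lt)
    (M : Set X) (hM : IsMmodule d M) (hMne : M.Nonempty) :
    IsStrictTotalOrder X (revOrder lt M) ∧ IsCompatible d (revOrder lt M) :=
  reverse_mmodule_block_compatible_general d hsymm lt hsto hcomp M hM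
end

section
/- Let (X,d) be a dissimilarity space that is conical with apex p (d(p,x) = δ > 0 for all x ∈ X \ {p}), let X' = X \ {p}, let <' be a compatible order of (X',d), and let (y,z) be a pair of consecutive elements of <' with y <' z. Define the total order <_{(y,z)} on X by inserting p between y and z (it agrees with <' on X', and u <_{(y,z)} p for all u ≤' y while p <_{(y,z)} v for all v ≥' z). Then <_{(y,z)} is a compatible order of (X,d) if and only if for all u, v ∈ X' with u <' v the following two conditions hold: (1) if u ≤' y and z ≤' v, then d(u,v) ≥ δ; (2) if v ≤' y or z ≤' u, then d(u,v) ≤ δ. -/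
/-- The total order `<_{(y,z)}` on `X` obtained from a total order `lt'` on
`X' = X \ {p}` by inserting `p` in the hole between `y` and its successor `z`:
`u < p` for all `u ≤' y` and `p < v` for all `v` with `y <' v` (i.e. `z ≤' v`). -/
def insertOrder {X : Type*} (p : X)
    (lt' : {x : X // x ≠ p} → {x : X // x ≠ p} → Prop)
    (y : {x : X // x ≠ p}) : X → X → Prop :=
  fun u v =>
    (∃ hv : v ≠ p, u = p ∧ lt' y ⟨v, hv⟩) ∨
    (∃ hu : u ≠ p, v = p ∧ ¬ lt' y ⟨u, hu⟩) ∨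
    (∃ hu : u ≠ p, ∃ hv : v ≠ p, lt' ⟨u, hu⟩ ⟨v, hv⟩)

/-! Since `d p · = δ` off the apex, the compatibility inequality for a triple through `p`
compares the remaining distance with `δ`: it reads `δ ≤ d u v` when `p` sits between `u` and
`v`, and `d u v ≤ δ` when `p` is an end of the triple; triples avoiding `p` are covered by the
compatibility of `<'`. As `y, z` are consecutive, `y <' v ↔ ¬ v <' z`, which turns the positions
of `p` into conditions (1) and (2). -/

section InsertOrder

variable {X : Type*} {p : X} {lt' : {x : X // x ≠ p} → {x : X // x ≠ p} → Prop}
  {y : {x : X // x ≠ p}}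

@[simp]
theorem insertOrder_coe_coe {u v : {x : X // x ≠ p}} :
    insertOrder p lt' y u v ↔ lt' u v := by
  simp [insertOrder, u.2, v.2]

@[simp]
theorem insertOrder_apex_coe {v : {x : X // x ≠ p}} :
    insertOrder p lt' y p v ↔ lt' y v := by
  simp [insertOrder, v.2]

@[simp]
theorem insertOrder_coe_apex {u : {x : X // x ≠ p}} :
    insertOrder p lt' y u p ↔ ¬ lt' y u := by
  simp [insertOrder, u.2]

@[simp]
theorem not_insertOrder_apex_apex : ¬ insertOrder p lt' y p p := by
  simp [insertOrder]

/-- No triple of the extended order contains `p` twice, so there are four kinds of triples. -/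
theorem isCompatible_insertOrder_iff (d : X → X → ℝ) :
    IsCompatible d (insertOrder p lt' y) ↔
      IsCompatible (fun u v : {x : X // x ≠ p} => d u v) lt' ∧
      (∀ u v : {x : X // x ≠ p}, ¬ lt' y u → lt' y v → max (d u p) (d p v) ≤ d u v) ∧
      (∀ u v : {x : X // x ≠ p}, lt' u v → ¬ lt' y v → max (d u v) (d v p) ≤ d u p) ∧
      (∀ u v : {x : X // x ≠ p}, lt' y u → lt' u v → max (d p u) (d u v) ≤ d p v) := by
  constructor
  · intro h
    refine ⟨fun u v w huv hvw => h u v w ?_ ?_, fun u v hu hv => h u p v ?_ ?_,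
      fun u v huv hv => h u v p ?_ ?_, fun u v hu huv => h p u v ?_ ?_⟩ <;> simpa
  · rintro ⟨hX', hpMid, hpRight, hpLeft⟩ a b c hab hbc
    rcases eq_or_ne p a with rfl | ha <;> rcases eq_or_ne p b with rfl | hb <;>
      rcases eq_or_ne p c with rfl | hc
    · simp at hab
    · simp at hab
    · lift b to {x : X // x ≠ p} using hb.symm
      simp only [insertOrder_apex_coe, insertOrder_coe_apex] at hab hbc
      exact absurd hab hbc
    · lift b to {x : X // x ≠ p} using hb.symm
      lift c to {x : X // x ≠ p} using hc.symm
      simp only [insertOrder_apex_coe, insertOrder_coe_coe] at hab hbc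
      exact hpLeft b c hab hbc
    · simp at hbc
    · lift a to {x : X // x ≠ p} using ha.symm
      lift c to {x : X // x ≠ p} using hc.symm
      simp only [insertOrder_coe_apex, insertOrder_apex_coe] at hab hbc
      exact hpMid a c hab hbc
    · lift a to {x : X // x ≠ p} using ha.symm
      lift b to {x : X // x ≠ p} using hb.symm
      simp only [insertOrder_coe_coe, insertOrder_coe_apex] at hab hbc
      exact hpRight a b hab hbc
    · lift a to {x : X // x ≠ p} using ha.symm
      lift b to {x : X // x ≠ p} using hb.symm
      lift c to {x : X // x ≠ p} using hc.symm
      simp only [insertOrder_coe_coe] at hab hbc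
      exact hX' a b c hab hbc

end InsertOrder

theorem lt_iff_not_lt_of_consecutive {α : Type*} {r : α → α → Prop} [IsStrictTotalOrder α r]
    {y z : α} (hyz : r y z) (hconsec : ∀ w, ¬ (r y w ∧ r w z)) (v : α) :
    r y v ↔ ¬ r v z :=
  ⟨fun hyv hvz => hconsec v ⟨hyv, hvz⟩, trans_trichotomous_right hyz⟩

theorem insert_apex_admissible_iff_general {X : Type*} (d : X → X → ℝ)
    (hsymm : ∀ x y : X, d x y = d y x)
    (p : X) (δ : ℝ)
    (hconical : ∀ x : X, x ≠ p → d p x = δ)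
    (lt' : {x : X // x ≠ p} → {x : X // x ≠ p} → Prop)
    (hsto : IsStrictTotalOrder {x : X // x ≠ p} lt')
    (hcomp : ∀ u v w : {x : X // x ≠ p}, lt' u v → lt' v w →
      max (d u.1 v.1) (d v.1 w.1) ≤ d u.1 w.1)
    (y z : {x : X // x ≠ p}) (hyz : lt' y z)
    (hconsec : ∀ w : {x : X // x ≠ p}, ¬ (lt' y w ∧ lt' w z)) :
    IsCompatible d (insertOrder p lt' y) ↔
      ((∀ u v : {x : X // x ≠ p}, lt' u v → ¬ lt' y u → ¬ lt' v z → δ ≤ d u.1 v.1) ∧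
       (∀ u v : {x : X // x ≠ p}, lt' u v → (¬ lt' y v ∨ ¬ lt' u z) → d u.1 v.1 ≤ δ)) := by
  have hpx (u : {x : X // x ≠ p}) : d p u = δ := hconical u u.2
  have hxp (u : {x : X // x ≠ p}) : d u p = δ := (hsymm u p).trans (hpx u)
  have hz := lt_iff_not_lt_of_consecutive hyz hconsec
  simp only [isCompatible_insertOrder_iff, hpx, hxp, max_self, max_le_iff, le_refl, and_true,
    true_and]
  constructor
  · rintro ⟨-, hpMid, hpRight, hpLeft⟩
    refine ⟨fun u v _ hu hv => hpMid u v hu ((hz v).2 hv), ?_⟩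
    rintro u v huv (hv | hu)
    · exact hpRight u v huv hv
    · exact hpLeft u v ((hz u).2 hu) huv
  · rintro ⟨hcross, hside⟩
    exact ⟨hcomp, fun u v hu hv => hcross u v (trans_trichotomous_left hu hv) hu ((hz v).1 hv),
      fun u v huv hv => hside u v huv (.inl hv),
      fun u v hu huv => hside u v huv (.inr ((hz u).1 hu))⟩

/-- in a conical space with apex `p`, given a compatible order `<'` of
`X' = X \ {p}` and a pair `(y,z)` of consecutive elements of `<'`, inserting `p`
between `y` and `z` yields a compatible order of `(X,d)` iff for all `u <' v`
(1) `u ≤' y` and `z ≤' v` imply `d(u,v) ≥ δ`, and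
(2) `v ≤' y` or `z ≤' u` imply `d(u,v) ≤ δ`. -/
theorem insert_apex_admissible_iff {X : Type*} [Fintype X] (d : X → X → ℝ)
    (hsymm : ∀ x y : X, d x y = d y x)
    (hnonneg : ∀ x y : X, 0 ≤ d x y)
    (hself : ∀ x : X, d x x = 0)
    (p : X) (δ : ℝ) (hδpos : 0 < δ)
    (hconical : ∀ x : X, x ≠ p → d p x = δ)
    (lt' : {x : X // x ≠ p} → {x : X // x ≠ p} → Prop)
    (hsto : IsStrictTotalOrder {x : X // x ≠ p} lt')
    (hcomp : ∀ u v w : {x : X // x ≠ p}, lt' u v → lt' v w →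
      max (d u.1 v.1) (d v.1 w.1) ≤ d u.1 w.1)
    (y z : {x : X // x ≠ p}) (hyz : lt' y z)
    (hconsec : ∀ w : {x : X // x ≠ p}, ¬ (lt' y w ∧ lt' w z)) :
    IsCompatible d (insertOrder p lt' y) ↔
      ((∀ u v : {x : X // x ≠ p}, lt' u v → ¬ lt' y u → ¬ lt' v z → δ ≤ d u.1 v.1) ∧
       (∀ u v : {x : X // x ≠ p}, lt' u v → (¬ lt' y v ∨ ¬ lt' u z) → d u.1 v.1 ≤ δ)) :=
  insert_apex_admissible_iff_general d hsymm p δ hconical lt' hsto hcomp y z hyz hconsec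
end

section
/- Let (X,d) be a dissimilarity space with a compatible order <, let p ∈ X, and let C be a copoint at p with C ≠ {p}. Then both sets C^r := {u ∈ C : p < u} and C^l := {u ∈ C : u < p} are intervals of the order < (one of them may be empty). -/
def IsCopoint {X : Type*} (d : X → X → ℝ) (p : X) (C : Set X) : Prop :=
  IsMmodule d C ∧ p ∉ C ∧
    ∀ M : Set X, IsMmodule d M → p ∉ M → C ⊆ M → M = C

/-- `I` is an interval of the order `lt`. -/
def IsInterval {X : Type*} (lt : X → X → Prop) (I : Set X) : Prop :=
  ∀ x ∈ I, ∀ z ∈ I, ∀ y : X, lt x y → lt y z → y ∈ I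

namespace IsCompatible

variable {X : Type*} {d : X → X → ℝ} {lt : X → X → Prop}

theorem swap (hsymm : ∀ x y, d x y = d y x) (h : IsCompatible d lt) :
    IsCompatible d (Function.swap lt) := fun x y z hyx hzy => by
  simpa only [hsymm, max_comm] using h z y x hzy hyx

theorem dist_eq_of_lt_of_lt_of_lt [IsTrans X lt] (h : IsCompatible d lt) {w x u z : X}
    (hwx : lt w x) (hxu : lt x u) (huz : lt u z) (hxz : d w z = d w x) : d w u = d w x :=
  le_antisymm
    (hxz ▸ (le_max_left _ _).trans (h w u z (_root_.trans hwx hxu) huz))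
    ((le_max_left _ _).trans (h w x u hwx hxu))

end IsCompatible

section

variable {X : Type*} {d : X → X → ℝ} {lt : X → X → Prop} [IsStrictTotalOrder X lt]

theorem IsMmodule.union_between (hsymm : ∀ x y, d x y = d y x) (hcomp : IsCompatible d lt)
    {C : Set X} (hC : IsMmodule d C) {x z : X} (hx : x ∈ C) (hz : z ∈ C) :
    IsMmodule d (C ∪ {u | lt x u ∧ lt u z}) := by
  intro w hw
  simp only [Set.mem_union, Set.mem_ofPred_eq, not_or, not_and] at hw
  obtain ⟨hwC, hw_between⟩ := hw
  have hside : lt w x ∨ lt z w := by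
    rcases trichotomous_of lt w x with hwx | rfl | hxw
    · exact .inl hwx
    · exact absurd hx hwC
    rcases trichotomous_of lt w z with hwz | rfl | hzw
    · exact absurd hwz (hw_between hxw)
    · exact absurd hz hwC
    · exact .inr hzw
  have hxz : d w z = d w x := hC w hwC z hz x hx
  have hconst : ∀ u ∈ C ∪ {u | lt x u ∧ lt u z}, d w u = d w x := by
    rintro u (hu | ⟨hxu, huz⟩)
    · exact hC w hwC u hu x hx
    rcases hside with hwx | hzw
    · exact hcomp.dist_eq_of_lt_of_lt_of_lt hwx hxu huz hxz
    · rw [(hcomp.swap hsymm).dist_eq_of_lt_of_lt_of_lt hzw huz hxu hxz.symm, hxz]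
  intro a ha b hb
  rw [hconst a ha, hconst b hb]

theorem IsCopoint.mem_of_lt_of_lt (hsymm : ∀ x y, d x y = d y x) (hcomp : IsCompatible d lt)
    {p : X} {C : Set X} (hC : IsCopoint d p C) {x y z : X} (hx : x ∈ C) (hz : z ∈ C)
    (hp : ¬(lt x p ∧ lt p z)) (hxy : lt x y) (hyz : lt y z) : y ∈ C := by
  obtain ⟨hmod, hpC, hmax⟩ := hC
  have hunion := hmax _ (hmod.union_between hsymm hcomp hx hz) (by simp [hpC, hp])
    Set.subset_union_left
  exact hunion ▸ Or.inr ⟨hxy, hyz⟩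

end

theorem copoint_two_intervals_general {X : Type*} (d : X → X → ℝ)
    (hsymm : ∀ x y : X, d x y = d y x)
    (lt : X → X → Prop) (hsto : IsStrictTotalOrder X lt)
    (hcomp : IsCompatible d lt)
    (p : X) (C : Set X) (hC : IsCopoint d p C) :
    IsInterval lt {u ∈ C | lt p u} ∧ IsInterval lt {u ∈ C | lt u p} := by
  constructor
  · rintro x ⟨hx, hpx⟩ z ⟨hz, -⟩ y hxy hyz
    exact ⟨hC.mem_of_lt_of_lt hsymm hcomp hx hz (fun h => asymm hpx h.1) hxy hyz,
      _root_.trans hpx hxy⟩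
  · rintro x ⟨hx, -⟩ z ⟨hz, hzp⟩ y hxy hyz
    exact ⟨hC.mem_of_lt_of_lt hsymm hcomp hx hz (fun h => asymm hzp h.2) hxy hyz,
      _root_.trans hyz hzp⟩

/-- for a compatible order `<` and a copoint `C` at `p` with `C ≠ {p}`,
both `C^r = {u ∈ C : p < u}` and `C^l = {u ∈ C : u < p}` are intervals of `<`. -/
theorem copoint_two_intervals {X : Type*} [Fintype X] (d : X → X → ℝ)
    (hsymm : ∀ x y : X, d x y = d y x)
    (hnonneg : ∀ x y : X, 0 ≤ d x y)
    (hself : ∀ x : X, d x x = 0)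
    (lt : X → X → Prop) (hsto : IsStrictTotalOrder X lt)
    (hcomp : IsCompatible d lt)
    (p : X) (C : Set X) (hC : IsCopoint d p C) (hCne : C ≠ {p}) :
    IsInterval lt {u ∈ C | lt p u} ∧ IsInterval lt {u ∈ C | lt u p} :=
  copoint_two_intervals_general d hsymm lt hsto hcomp p C hC
end

section
/- Let (X,d) be a dissimilarity space with a compatible order <, let p ∈ X, and let C be a copoint at p with d(p,x) = δ for all x ∈ C. (1) If diam(C) < δ (C is non-separable), then C lies entirely on one side of p (either u < p for all u ∈ C, or p < u for all u ∈ C) and C is an interval of <. (2) If diam(C) > δ (C is separable), then C^l := {u ∈ C : u < p} and C^r := {u ∈ C : p < u} are both nonempty intervals of <, d(x,y) ≥ δ for every x ∈ C^l and y ∈ C^r, and diam(C^l) ≤ δ and diam(C^r) ≤ δ. -/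
/-- The order hull of a set `S`: all points lying between two elements of `S`. -/
def ohull {X : Type*} (lt : X → X → Prop) (S : Set X) : Set X :=
  {u | ∃ a ∈ S, ∃ c ∈ S, (a = u ∨ lt a u) ∧ (u = c ∨ lt u c)}

lemma subset_ohull {X : Type*} (lt : X → X → Prop) (S : Set X) : S ⊆ ohull lt S :=
  fun u hu => ⟨u, hu, u, hu, Or.inl rfl, Or.inl rfl⟩

lemma between_dist {X : Type*} {d : X → X → ℝ} {lt : X → X → Prop}
    (hsymm : ∀ x y : X, d x y = d y x)
    (hcomp : IsCompatible d lt)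
    (htrans : ∀ {a b c : X}, lt a b → lt b c → lt a c)
    {C : Set X} (hm : IsMmodule d C)
    {v u c1 c2 : X} (hv : v ∉ C) (h1 : c1 ∈ C) (h2 : c2 ∈ C)
    (hu1 : lt c1 u) (hu2 : lt u c2) (hside : lt v c1 ∨ lt c2 v) :
    d v u = d v c1 := by
  have hβ : d v c1 = d v c2 := hm v hv c1 h1 c2 h2
  rcases hside with h | h
  · have hvu : lt v u := htrans h hu1
    have le1 : d v c1 ≤ d v u := le_trans (le_max_left _ _) (hcomp v c1 u h hu1)
    have le2 : d v u ≤ d v c2 := le_trans (le_max_left _ _) (hcomp v u c2 hvu hu2)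
    linarith
  · have le1 : d c2 v ≤ d u v := le_trans (le_max_right _ _) (hcomp u c2 v hu2 h)
    have huv : lt u v := htrans hu2 h
    have le2 : d u v ≤ d c1 v := le_trans (le_max_right _ _) (hcomp c1 u v hu1 huv)
    have e1 := hsymm v u
    have e2 := hsymm v c1
    have e3 := hsymm v c2
    linarith

lemma hull_union_mmodule {X : Type*} {d : X → X → ℝ} {lt : X → X → Prop}
    (hsymm : ∀ x y : X, d x y = d y x)
    (hcomp : IsCompatible d lt)
    (hsto : IsStrictTotalOrder X lt)
    {C : Set X} (hm : IsMmodule d C) (S1 S2 : Set X)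
    (hS1 : S1 ⊆ C) (hS2 : S2 ⊆ C) (hcov : C ⊆ S1 ∪ S2) :
    IsMmodule d (ohull lt S1 ∪ ohull lt S2) := by
  haveI := hsto
  intro v hv u1 hu1 u2 hu2
  have hvC : v ∉ C := fun h => hv ((hcov h).imp (fun hh => subset_ohull lt S1 hh) (fun hh => subset_ohull lt S2 hh))
  have key : ∀ u ∈ ohull lt S1 ∪ ohull lt S2, ∀ c ∈ C, d v u = d v c := by
    intro u hu c hc
    have hgen : ∀ (S : Set X), S ⊆ C → u ∈ ohull lt S → v ∉ ohull lt S → d v u = d v c := by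
      rintro S hSC ⟨c1, h1, c2, h2, ha, hb⟩ hvS
      rcases ha with rfl | ha
      · exact hm v hvC c1 (hSC h1) c hc
      rcases hb with rfl | hb
      · exact hm v hvC u (hSC h2) c hc
      have hside : lt v c1 ∨ lt c2 v := by
        rcases trichotomous_of lt v c1 with h | rfl | h
        · exact Or.inl h
        · exact absurd (hSC h1) hvC
        rcases trichotomous_of lt v c2 with h' | rfl | h'
        · exact absurd ⟨c1, h1, c2, h2, Or.inr h, Or.inr h'⟩ hvS
        · exact absurd (hSC h2) hvC
        · exact Or.inr h'
      have := between_dist hsymm hcomp (fun hab hbc => trans_of lt hab hbc) hm hvC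
        (hSC h1) (hSC h2) ha hb hside
      rw [this]
      exact hm v hvC c1 (hSC h1) c hc
    rcases hu with h | h
    · exact hgen S1 hS1 h (fun hh => hv (Or.inl hh))
    · exact hgen S2 hS2 h (fun hh => hv (Or.inr hh))
  obtain ⟨c0, hc0⟩ : ∃ c, c ∈ C := by
    rcases hu1 with ⟨c1, h1, _⟩ | ⟨c1, h1, _⟩
    · exact ⟨c1, hS1 h1⟩
    · exact ⟨c1, hS2 h1⟩
  rw [key u1 hu1 c0 hc0, key u2 hu2 c0 hc0]

/-- let `<` be a compatible order, `C` a copoint at `p` with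
`d(p,x) = δ` on `C`.
(1) If `diam(C) < δ` then `C` lies entirely on one side of `p` and is an interval.
(2) If `diam(C) > δ` then `C^l = {u ∈ C : u < p}` and `C^r = {u ∈ C : p < u}` are
nonempty intervals, `d(x,y) ≥ δ` for `x ∈ C^l`, `y ∈ C^r`, and
`diam(C^l) ≤ δ`, `diam(C^r) ≤ δ`. -/
theorem copoint_separable_nonseparable {X : Type*} [Fintype X] (d : X → X → ℝ)
    (hsymm : ∀ x y : X, d x y = d y x)
    (hnonneg : ∀ x y : X, 0 ≤ d x y)
    (hself : ∀ x : X, d x x = 0)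
    (lt : X → X → Prop) (hsto : IsStrictTotalOrder X lt)
    (hcomp : IsCompatible d lt)
    (p : X) (C : Set X) (hC : IsCopoint d p C)
    (δ : ℝ) (hδ : ∀ x ∈ C, d p x = δ) :
    ((∀ x ∈ C, ∀ y ∈ C, d x y < δ) →
      ((∀ u ∈ C, lt u p) ∨ (∀ u ∈ C, lt p u)) ∧ IsInterval lt C) ∧
    ((∃ x ∈ C, ∃ y ∈ C, δ < d x y) →
      {u ∈ C | lt u p}.Nonempty ∧ {u ∈ C | lt p u}.Nonempty ∧
      IsInterval lt {u ∈ C | lt u p} ∧ IsInterval lt {u ∈ C | lt p u} ∧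
      (∀ x ∈ {u ∈ C | lt u p}, ∀ y ∈ {u ∈ C | lt p u}, δ ≤ d x y) ∧
      (∀ x ∈ {u ∈ C | lt u p}, ∀ y ∈ {u ∈ C | lt u p}, d x y ≤ δ) ∧
      (∀ x ∈ {u ∈ C | lt p u}, ∀ y ∈ {u ∈ C | lt p u}, d x y ≤ δ)) := by
  haveI := hsto
  obtain ⟨hmC, hpC, hmax⟩ := hC
  constructor
  · -- non-separable case
    intro hdiam
    have hside : (∀ u ∈ C, lt u p) ∨ (∀ u ∈ C, lt p u) := by
      by_contra h
      push_neg at h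
      obtain ⟨⟨u, hu, hup⟩, ⟨w, hw, hpw⟩⟩ := h
      have h1 : lt p u := by
        rcases trichotomous_of lt u p with h' | rfl | h'
        · exact absurd h' hup
        · exact absurd hu hpC
        · exact h'
      have h2 : lt w p := by
        rcases trichotomous_of lt w p with h' | rfl | h'
        · exact h'
        · exact absurd hw hpC
        · exact absurd h' hpw
      have hc := hcomp w p u h2 h1
      have hwp : d w p = δ := by rw [hsymm]; exact hδ w hw
      have : δ ≤ d w u := le_trans (by rw [← hwp]; exact le_max_left _ _) hc
      exact absurd this (not_le.2 (hdiam w hw u hu))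
    refine ⟨hside, ?_⟩
    have hM := hull_union_mmodule hsymm hcomp hsto hmC C ∅
      (subset_refl C) (Set.empty_subset C) (fun x hx => Or.inl hx)
    have hpM : p ∉ ohull lt C ∪ ohull lt (∅ : Set X) := by
      rintro (⟨c1, h1, c2, h2, ha, hb⟩ | ⟨c1, h1, _⟩)
      · rcases hside with hs | hs
        · rcases hb with rfl | hb
          · exact hpC h2
          · exact (irrefl_of lt p) (trans_of lt hb (hs c2 h2))
        · rcases ha with rfl | ha
          · exact hpC h1
          · exact (irrefl_of lt p) (trans_of lt (hs c1 h1) ha)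
      · exact h1
    have hMC : ohull lt C ∪ ohull lt (∅ : Set X) = C :=
      hmax _ hM hpM (fun x hx => Or.inl (subset_ohull lt C hx))
    intro x hx z hz y hxy hyz
    have : y ∈ ohull lt C ∪ ohull lt (∅ : Set X) :=
      Or.inl ⟨x, hx, z, hz, Or.inr hxy, Or.inr hyz⟩
    rwa [hMC] at this
  · -- separable case
    rintro ⟨x, hx, y, hy, hxy⟩
    have hδ0 : 0 ≤ δ := (hδ x hx) ▸ hnonneg p x
    have hpair : ∃ a ∈ C, ∃ b ∈ C, lt a p ∧ lt p b := by
      have main : ∀ a b, a ∈ C → b ∈ C → lt a b → δ < d a b →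
          ∃ a' ∈ C, ∃ b' ∈ C, lt a' p ∧ lt p b' := by
        intro a b ha hb hab hd
        rcases trichotomous_of lt a p with h1 | rfl | h1
        · rcases trichotomous_of lt b p with h2 | rfl | h2
          · have := le_trans (le_max_left _ _) (hcomp a b p hab h2)
            rw [hsymm a p, hδ a ha] at this
            linarith
          · exact absurd hb hpC
          · exact ⟨a, ha, b, hb, h1, h2⟩
        · exact absurd ha hpC
        · have := le_trans (le_max_right _ _) (hcomp p a b h1 hab)
          rw [hδ b hb] at this
          linarith
      rcases trichotomous_of lt x y with h | rfl | h
      · exact main x y hx hy h hxy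
      · rw [hself x] at hxy; linarith
      · exact main y x hy hx h (by rw [hsymm y x]; exact hxy)
    obtain ⟨a, ha, b, hb, hap, hpb⟩ := hpair
    have hS1C : {u ∈ C | lt u p} ⊆ C := fun u hu => hu.1
    have hS2C : {u ∈ C | lt p u} ⊆ C := fun u hu => hu.1
    have hcov : C ⊆ {u ∈ C | lt u p} ∪ {u ∈ C | lt p u} := by
      intro u hu
      rcases trichotomous_of lt u p with h | rfl | h
      · exact Or.inl ⟨hu, h⟩
      · exact absurd hu hpC
      · exact Or.inr ⟨hu, h⟩
    have hM := hull_union_mmodule hsymm hcomp hsto hmC _ _ hS1C hS2C hcov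
    have hpM : p ∉ ohull lt {u ∈ C | lt u p} ∪ ohull lt {u ∈ C | lt p u} := by
      rintro (⟨c1, h1, c2, h2, ha', hb'⟩ | ⟨c1, h1, c2, h2, ha', hb'⟩)
      · rcases hb' with rfl | hb'
        · exact hpC h2.1
        · exact (irrefl_of lt p) (trans_of lt hb' h2.2)
      · rcases ha' with rfl | ha'
        · exact hpC h1.1
        · exact (irrefl_of lt p) (trans_of lt h1.2 ha')
    have hMC : ohull lt {u ∈ C | lt u p} ∪ ohull lt {u ∈ C | lt p u} = C :=
      hmax _ hM hpM (fun u hu => (hcov hu).imp (fun hh => subset_ohull lt _ hh) (fun hh => subset_ohull lt _ hh))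
    refine ⟨⟨a, ha, hap⟩, ⟨b, hb, hpb⟩, ?_, ?_, ?_, ?_, ?_⟩
    · intro x hx z hz y hxy hyz
      have hyC : y ∈ C := by
        rw [← hMC]; exact Or.inl ⟨x, hx, z, hz, Or.inr hxy, Or.inr hyz⟩
      exact ⟨hyC, trans_of lt hyz hz.2⟩
    · intro x hx z hz y hxy hyz
      have hyC : y ∈ C := by
        rw [← hMC]; exact Or.inr ⟨x, hx, z, hz, Or.inr hxy, Or.inr hyz⟩
      exact ⟨hyC, trans_of lt hx.2 hxy⟩
    · intro x hx y hy
      have hc := le_trans (le_max_left _ _) (hcomp x p y hx.2 hy.2)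
      have : d x p = δ := by rw [hsymm]; exact hδ x hx.1
      linarith
    · intro x hx y hy
      rcases trichotomous_of lt x y with h | rfl | h
      · have hc := le_trans (le_max_left _ _) (hcomp x y p h hy.2)
        have : d x p = δ := by rw [hsymm]; exact hδ x hx.1
        linarith
      · rw [hself]; exact hδ0
      · have hc := le_trans (le_max_left _ _) (hcomp y x p h hx.2)
        have e : d y p = δ := by rw [hsymm]; exact hδ y hy.1
        rw [hsymm x y]; linarith
    · intro x hx y hy
      rcases trichotomous_of lt x y with h | rfl | h
      · have hc := le_trans (le_max_right _ _) (hcomp p x y hx.2 h)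
        have : d p y = δ := hδ y hy.1
        linarith
      · rw [hself]; exact hδ0
      · have hc := le_trans (le_max_right _ _) (hcomp p y x hy.2 h)
        have e : d p x = δ := hδ x hx.1
        rw [hsymm x y]; linarith
end
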